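/- For λ > 0, μ ≥ 0 with μ ≠ 1, λ + 1 − μ ≠ 0, and every n ≥ 0 and real x: 𝔙_n(x;λ;μ) = (1/(2(μ−1))) · [ (μ−2) 𝔈_n(x; λ/(1−μ)) − (μ n / 2) 𝔈_{n−1}(x; λ/(1−μ)) ], where the second term is interpreted as 0 when n = 0. -/

import Mathlib

open PowerSeries Finset

/-- `V n x` are the unified Apostol Bernoulli–Euler polynomials `𝔙_n(x;λ;μ)`:
`(2−μ+(μ/2)t) e^{xt} = (λ e^t + (1−μ)) · Σ 𝔙_n(x;λ;μ) t^n/n!` as formal power series over ℝ. -/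
def IsUnifiedApostolBE (lam mu : ℝ) (V : ℕ → ℝ → ℝ) : Prop :=
  ∀ x : ℝ,
    (PowerSeries.C lam * PowerSeries.exp ℝ + PowerSeries.C (1 - mu)) *
        PowerSeries.mk (fun n => V n x / n.factorial) =
      (PowerSeries.C (2 - mu) + PowerSeries.C (mu / 2) * PowerSeries.X) *
        PowerSeries.rescale x (PowerSeries.exp ℝ)

/-- `E n x` are the Apostol–Euler polynomials `𝔈_n(x;ν)`:
`2 e^{xt} = (ν e^t + 1) · Σ 𝔈_n(x;ν) t^n/n!` as formal power series over ℝ. -/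
def IsApostolEuler (nu : ℝ) (E : ℕ → ℝ → ℝ) : Prop :=
  ∀ x : ℝ,
    (PowerSeries.C nu * PowerSeries.exp ℝ + 1) *
        PowerSeries.mk (fun n => E n x / n.factorial) =
      PowerSeries.C 2 * PowerSeries.rescale x (PowerSeries.exp ℝ)

theorem unified_as_apostol_euler (lam mu : ℝ) (hlam : 0 < lam) (hmu : 0 ≤ mu) (hmu1 : mu ≠ 1)
    (hden : lam + 1 - mu ≠ 0) (V : ℕ → ℝ → ℝ) (hV : IsUnifiedApostolBE lam mu V)
    (E : ℕ → ℝ → ℝ) (hE : IsApostolEuler (lam / (1 - mu)) E)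
    (n : ℕ) (x : ℝ) :
    V n x = (1 / (2 * (mu - 1))) *
      ((mu - 2) * E n x - (mu * n / 2) * E (n - 1) x) := by
  have h1mu : (1 : ℝ) - mu ≠ 0 := sub_ne_zero.mpr (Ne.symm hmu1)
  have hmu1' : mu - 1 ≠ 0 := sub_ne_zero.mpr hmu1
  have hfac : PowerSeries.C lam * PowerSeries.exp ℝ + PowerSeries.C (1 - mu) =
      PowerSeries.C (1 - mu) * (PowerSeries.C (lam / (1 - mu)) * PowerSeries.exp ℝ + 1) := by
    rw [mul_add, mul_one, ← mul_assoc, ← map_mul]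
    field_simp
  have hAG := hE x
  have key : (PowerSeries.C lam * PowerSeries.exp ℝ + PowerSeries.C (1 - mu)) *
      (PowerSeries.C (1 / (2 * (mu - 1))) *
        (PowerSeries.C (mu - 2) * PowerSeries.mk (fun n => E n x / n.factorial) -
          PowerSeries.C (mu / 2) * (PowerSeries.X * PowerSeries.mk (fun n => E n x / n.factorial)))) =
      (PowerSeries.C (2 - mu) + PowerSeries.C (mu / 2) * PowerSeries.X) *
        PowerSeries.rescale x (PowerSeries.exp ℝ) := by
    rw [hfac]
    calc PowerSeries.C (1 - mu) * (PowerSeries.C (lam / (1 - mu)) * PowerSeries.exp ℝ + 1) *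
          (PowerSeries.C (1 / (2 * (mu - 1))) *
            (PowerSeries.C (mu - 2) * PowerSeries.mk (fun n => E n x / n.factorial) -
              PowerSeries.C (mu / 2) * (PowerSeries.X * PowerSeries.mk (fun n => E n x / n.factorial))))
        = PowerSeries.C ((1 - mu) * (1 / (2 * (mu - 1)))) *
            ((PowerSeries.C (mu - 2) - PowerSeries.C (mu / 2) * PowerSeries.X) *
              ((PowerSeries.C (lam / (1 - mu)) * PowerSeries.exp ℝ + 1) *
                PowerSeries.mk (fun n => E n x / n.factorial))) := by
          rw [map_mul]; ring
      _ = PowerSeries.C ((1 - mu) * (1 / (2 * (mu - 1)))) *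
            ((PowerSeries.C (mu - 2) - PowerSeries.C (mu / 2) * PowerSeries.X) *
              (PowerSeries.C 2 * PowerSeries.rescale x (PowerSeries.exp ℝ))) := by rw [hAG]
      _ = (PowerSeries.C (2 - mu) + PowerSeries.C (mu / 2) * PowerSeries.X) *
            PowerSeries.rescale x (PowerSeries.exp ℝ) := by
          have h0 : (1 - mu) * (1 / (2 * (mu - 1))) = -(1/2) := by field_simp; ring
          rw [h0]
          have h2 : PowerSeries.C (-(1/2)) * ((PowerSeries.C (mu - 2) -
              PowerSeries.C (mu / 2) * PowerSeries.X) * PowerSeries.C 2) =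
              PowerSeries.C (2 - mu) + PowerSeries.C (mu / 2) * PowerSeries.X := by
            calc PowerSeries.C (-(1/2)) * ((PowerSeries.C (mu - 2) -
                  PowerSeries.C (mu / 2) * PowerSeries.X) * PowerSeries.C 2)
                = PowerSeries.C (-(1/2)) * PowerSeries.C (mu - 2) * PowerSeries.C 2 -
                  PowerSeries.C (-(1/2)) * PowerSeries.C (mu / 2) * PowerSeries.C 2 *
                    PowerSeries.X := by ring
              _ = PowerSeries.C (-(1/2) * (mu - 2) * 2) -
                  PowerSeries.C (-(1/2) * (mu / 2) * 2) * PowerSeries.X := by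
                    rw [← map_mul, ← map_mul, ← map_mul, ← map_mul]
              _ = _ := by
                    rw [show -(1/2 : ℝ) * (mu - 2) * 2 = 2 - mu by ring,
                      show -(1/2 : ℝ) * (mu / 2) * 2 = -(mu / 2) by ring, map_neg]
                    ring
          calc PowerSeries.C (-(1/2)) * ((PowerSeries.C (mu - 2) -
                PowerSeries.C (mu / 2) * PowerSeries.X) *
                (PowerSeries.C 2 * PowerSeries.rescale x (PowerSeries.exp ℝ)))
              = PowerSeries.C (-(1/2)) * ((PowerSeries.C (mu - 2) -
                PowerSeries.C (mu / 2) * PowerSeries.X) * PowerSeries.C 2) *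
                PowerSeries.rescale x (PowerSeries.exp ℝ) := by ring
            _ = _ := by rw [h2]
  have hne : (PowerSeries.C lam * PowerSeries.exp ℝ + PowerSeries.C (1 - mu)) ≠ 0 := by
    intro h
    have := congrArg (PowerSeries.constantCoeff) h
    simp [PowerSeries.exp] at this
    exact hden (by linarith)
  have heq : PowerSeries.mk (fun n => V n x / n.factorial) =
      PowerSeries.C (1 / (2 * (mu - 1))) *
        (PowerSeries.C (mu - 2) * PowerSeries.mk (fun n => E n x / n.factorial) -
          PowerSeries.C (mu / 2) * (PowerSeries.X * PowerSeries.mk (fun n => E n x / n.factorial))) :=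
    mul_left_cancel₀ hne ((hV x).trans key.symm)
  have hcoeff := congrArg (PowerSeries.coeff n) heq
  rw [PowerSeries.coeff_mk, PowerSeries.coeff_C_mul, map_sub, PowerSeries.coeff_C_mul,
    PowerSeries.coeff_C_mul, PowerSeries.coeff_mk] at hcoeff
  have hfacn : (n.factorial : ℝ) ≠ 0 := Nat.cast_ne_zero.mpr n.factorial_ne_zero
  cases n with
  | zero =>
      rw [show ((0:ℕ) : ℝ) = 0 by norm_num]
      simp only [PowerSeries.coeff_zero_eq_constantCoeff, map_mul,
        PowerSeries.constantCoeff_X, mul_zero] at hcoeff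
      simp only [Nat.factorial_zero, Nat.cast_one, div_one] at hcoeff
      rw [hcoeff]; ring
  | succ m =>
      rw [PowerSeries.coeff_succ_X_mul, PowerSeries.coeff_mk] at hcoeff
      have hfm : ((m).factorial : ℝ) ≠ 0 := Nat.cast_ne_zero.mpr m.factorial_ne_zero
      have hfs : ((m+1).factorial : ℝ) = ((m:ℝ)+1) * m.factorial := by
        rw [Nat.factorial_succ]; push_cast; ring
      have h2 : V (m+1) x = ((m+1).factorial : ℝ) *
          (1 / (2 * (mu - 1)) * ((mu - 2) * (E (m+1) x / (m+1).factorial) -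
            mu / 2 * (E m x / m.factorial))) := by
        rw [← hcoeff]; field_simp
      rw [h2, hfs]
      simp only [Nat.add_sub_cancel]
      push_cast
      field_simp
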